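/- arXiv:1412.4035 — 2 statements merged into one kernel-verified Lean document; each statement's English description precedes it below -/
import Mathlib

section
/- For any proper subdomain D ⊊ R^n and x, y ∈ D, p_D(x,y) ≤ √2 · min(δ_D(x), δ_D(y)) · c_D(x,y), where p_D(x,y) = |x-y|/√(|x-y|² + 4δ_D(x)δ_D(y)) and c_D is the Cassinian metric. -/
open Metric Set

abbrev E (n : ℕ) := EuclideanSpace ℝ (Fin n)

/-- The Cassinian metric of a domain `D`. -/
noncomputable def cassinian {n : ℕ} (D : Set (E n)) (x y : E n) : ℝ :=
  ⨆ p : frontier D, dist x y / (dist x (p : E n) * dist (p : E n) y)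

/-- The quantity p_D. -/
noncomputable def pdist {n : ℕ} (D : Set (E n)) (x y : E n) : ℝ :=
  dist x y / Real.sqrt (dist x y ^ 2 + 4 * infDist x (frontier D) * infDist y (frontier D))

/-!
Let `a = δ(x) ≤ δ(y) = b`, `r = |x - y|`, and let `p ∈ ∂D` be a boundary point nearest to `x`.
Then `|p - y| ≤ a + r`, so the term of `c_D(x, y)` at `p` is at least `r / (a (a + r))`, and
the claim reduces to the scalar inequality `(a + r)² ≤ 2 (r² + 4ab)`, which is
`(r - a)² + 2a (4b - a) ≥ 0`.
-/

lemma div_sqrt_le_sqrt_two_mul_div {a b r : ℝ} (ha : 0 < a) (hab : a ≤ b) (hr : 0 ≤ r) :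
    r / √(r ^ 2 + 4 * a * b) ≤ √2 * r / (a + r) := by
  have key : (a + r) / √2 ≤ √(r ^ 2 + 4 * a * b) := by
    rw [div_le_iff₀ (by positivity), ← Real.sqrt_mul' _ zero_le_two]
    exact Real.le_sqrt_of_sq_le (by nlinarith [sq_nonneg (r - a)])
  calc r / √(r ^ 2 + 4 * a * b) ≤ r / ((a + r) / √2) :=
        div_le_div_of_nonneg_left hr (by positivity) key
    _ = √2 * r / (a + r) := by field_simp

lemma infDist_frontier_pos {α : Type*} [PseudoMetricSpace α] [PreconnectedSpace α]
    {D : Set α} {x : α} (hD : IsOpen D) (hDp : D ≠ univ) (hx : x ∈ D) :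
    0 < infDist x (frontier D) :=
  (isClosed_frontier.notMem_iff_infDist_pos (nonempty_frontier_iff.mpr ⟨⟨x, hx⟩, hDp⟩)).mp
    fun hxF => (hD.frontier_eq ▸ hxF).2 hx

section Cassinian

variable {n : ℕ}

lemma cassinian_comm (D : Set (E n)) (x y : E n) : cassinian D x y = cassinian D y x := by
  unfold cassinian
  congr 1
  funext p
  rw [dist_comm x y, dist_comm x (p : E n), dist_comm (p : E n) y, mul_comm]

lemma pdist_comm (D : Set (E n)) (x y : E n) : pdist D x y = pdist D y x := by
  unfold pdist
  rw [dist_comm x y]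
  ring_nf

variable {D : Set (E n)} {x y : E n}

lemma dist_div_le_cassinian (hx : 0 < infDist x (frontier D)) (hy : 0 < infDist y (frontier D))
    {p : E n} (hp : p ∈ frontier D) :
    dist x y / (dist x p * dist p y) ≤ cassinian D x y := by
  refine le_ciSup (f := fun q : frontier D => dist x y / (dist x (q : E n) * dist (q : E n) y))
    ⟨dist x y / (infDist x (frontier D) * infDist y (frontier D)), ?_⟩ ⟨p, hp⟩
  rintro _ ⟨q, rfl⟩
  have hxq : infDist x (frontier D) ≤ dist x q := infDist_le_dist_of_mem q.2
  have hqy : infDist y (frontier D) ≤ dist (q : E n) y := dist_comm y q ▸ infDist_le_dist_of_mem q.2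
  exact div_le_div_of_nonneg_left dist_nonneg (mul_pos hx hy)
    (mul_le_mul hxq hqy hy.le (hx.le.trans hxq))

lemma dist_div_infDist_mul_le_cassinian (hx : 0 < infDist x (frontier D))
    (hy : 0 < infDist y (frontier D)) :
    dist x y / (infDist x (frontier D) * (infDist x (frontier D) + dist x y)) ≤
      cassinian D x y := by
  have hF : (frontier D).Nonempty := nonempty_iff_ne_empty.2 fun h => by simp [h] at hx
  obtain ⟨p, hp, hxp⟩ := isClosed_frontier.exists_infDist_eq_dist hF x
  have hpy : dist p y ≤ dist x p + dist x y := dist_comm p x ▸ dist_triangle p x y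
  have hpy_pos : 0 < dist p y := hy.trans_le (dist_comm y p ▸ infDist_le_dist_of_mem hp)
  refine le_trans ?_ (dist_div_le_cassinian hx hy hp)
  rw [hxp]
  exact div_le_div_of_nonneg_left dist_nonneg (mul_pos (hxp ▸ hx) hpy_pos)
    (mul_le_mul_of_nonneg_left hpy dist_nonneg)

end Cassinian

theorem pdist_le_cassinian_general (n : ℕ) (D : Set (E n)) (hD : IsOpen D)
    (hDp : D ≠ univ) (x y : E n) (hx : x ∈ D) (hy : y ∈ D) :
    pdist D x y ≤
      Real.sqrt 2 * min (infDist x (frontier D)) (infDist y (frontier D)) * cassinian D x y := by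
  wlog hab : infDist x (frontier D) ≤ infDist y (frontier D) generalizing x y
  · rw [pdist_comm, cassinian_comm, min_comm]
    exact this y x hy hx (le_of_not_ge hab)
  have ha := infDist_frontier_pos hD hDp hx
  have hb := infDist_frontier_pos hD hDp hy
  rw [min_eq_left hab]
  calc pdist D x y ≤ √2 * dist x y / (infDist x (frontier D) + dist x y) :=
        div_sqrt_le_sqrt_two_mul_div ha hab dist_nonneg
    _ = √2 * infDist x (frontier D) *
          (dist x y / (infDist x (frontier D) * (infDist x (frontier D) + dist x y))) := by
        field_simp
    _ ≤ √2 * infDist x (frontier D) * cassinian D x y := by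
        gcongr
        exact dist_div_infDist_mul_le_cassinian ha hb

theorem pdist_le_cassinian (n : ℕ) (hn : 2 ≤ n) (D : Set (E n)) (hD : IsOpen D)
    (hDc : IsConnected D) (hDp : D ≠ univ) (x y : E n) (hx : x ∈ D) (hy : y ∈ D) :
    pdist D x y ≤
      Real.sqrt 2 * min (infDist x (frontier D)) (infDist y (frontier D)) * cassinian D x y :=
  pdist_le_cassinian_general n D hD hDp x y hx hy
end

section
/- In the unit ball B^n, for each x ∈ B^n, the inner Cassinian distance from 0 to x equals the Cassinian distance: c̃(0,x) = c(0,x) = |x|/(1-|x|). -/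
open Metric Set

/-- The Cassinian length of a curve `g : [0,1] → ℝⁿ`: the supremum over partitions
of `[0,1]` of the sums of Cassinian distances of consecutive points. -/
noncomputable def cassinianLength {n : ℕ} (D : Set (E n)) (g : ℝ → E n) : ENNReal :=
  ⨆ p : ℕ × {u : ℕ → ℝ // Monotone u ∧ ∀ i, u i ∈ Icc (0 : ℝ) 1},
    ∑ i ∈ Finset.range p.1, ENNReal.ofReal (cassinian D (g (p.2.1 i)) (g (p.2.1 (i + 1))))

/-- The inner Cassinian metric: the infimum of Cassinian lengths over curves in `D`
joining `x` to `y`. -/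
noncomputable def innerCassinian {n : ℕ} (D : Set (E n)) (x y : E n) : ENNReal :=
  ⨅ g : {g : ℝ → E n // ContinuousOn g (Icc (0 : ℝ) 1) ∧ g 0 = x ∧ g 1 = y ∧
      g '' Icc (0 : ℝ) 1 ⊆ D},
    cassinianLength D g.1

lemma dist_div_le_of_norm_eq_one {F : Type*} [SeminormedAddCommGroup F] {a b p : F}
    (ha : ‖a‖ < 1) (hb : ‖b‖ < 1) (hp : ‖p‖ = 1) :
    dist a b / (dist a p * dist p b) ≤ dist a b / ((1 - ‖a‖) * (1 - ‖b‖)) := by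
  have hap : 1 - ‖a‖ ≤ dist a p := by
    rw [dist_comm, dist_eq_norm]
    linarith [norm_sub_norm_le p a]
  have hpb : 1 - ‖b‖ ≤ dist p b := by
    rw [dist_eq_norm]
    linarith [norm_sub_norm_le p b]
  have ha' : 0 < 1 - ‖a‖ := sub_pos.2 ha
  have hb' : 0 < 1 - ‖b‖ := sub_pos.2 hb
  exact div_le_div_of_nonneg_left dist_nonneg (mul_pos ha' hb')
    (mul_le_mul hap hpb hb'.le dist_nonneg)

lemma dist_smul_smul_of_le {F : Type*} [SeminormedAddCommGroup F] [NormedSpace ℝ F] (x : F)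
    {s t : ℝ} (hst : s ≤ t) : dist (s • x) (t • x) = (t - s) * ‖x‖ := by
  rw [dist_eq_norm, ← sub_smul, norm_smul, Real.norm_eq_abs, abs_of_nonpos (by linarith)]
  ring

variable {n : ℕ}

lemma cassinian_nonneg (D : Set (E n)) (x y : E n) : 0 ≤ cassinian D x y :=
  Real.iSup_nonneg fun _ => by positivity

lemma mem_frontier_unitBall_iff {p : E n} : p ∈ frontier (ball (0 : E n) 1) ↔ ‖p‖ = 1 := by
  rw [frontier_ball (0 : E n) one_ne_zero, mem_sphere_zero_iff_norm]

lemma cassinian_unitBall_le {a b : E n} (ha : ‖a‖ < 1) (hb : ‖b‖ < 1) :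
    cassinian (ball 0 1) a b ≤ dist a b / ((1 - ‖a‖) * (1 - ‖b‖)) := by
  have ha' : 0 < 1 - ‖a‖ := sub_pos.2 ha
  have hb' : 0 < 1 - ‖b‖ := sub_pos.2 hb
  exact Real.iSup_le (fun p => dist_div_le_of_norm_eq_one ha hb
    (mem_frontier_unitBall_iff.1 p.2)) (by positivity)

lemma dist_div_le_cassinian_unitBall {a b p : E n} (ha : ‖a‖ < 1) (hb : ‖b‖ < 1)
    (hp : ‖p‖ = 1) : dist a b / (dist a p * dist p b) ≤ cassinian (ball 0 1) a b :=
  le_ciSup (f := fun q : frontier (ball (0 : E n) 1) => dist a b / (dist a q * dist (q : E n) b))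
    ⟨dist a b / ((1 - ‖a‖) * (1 - ‖b‖)), forall_mem_range.2 fun q =>
      dist_div_le_of_norm_eq_one ha hb (mem_frontier_unitBall_iff.1 q.2)⟩
    ⟨p, mem_frontier_unitBall_iff.2 hp⟩

lemma cassinian_unitBall_smul_smul (x : E n) {s t : ℝ} (hs : 0 ≤ s) (hst : s ≤ t)
    (ht : t * ‖x‖ < 1) :
    cassinian (ball 0 1) (s • x) (t • x) = (1 - t * ‖x‖)⁻¹ - (1 - s * ‖x‖)⁻¹ := by
  set r := ‖x‖ with hr
  have hr0 : 0 ≤ r := norm_nonneg x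
  have hs' : s * r < 1 := lt_of_le_of_lt (mul_le_mul_of_nonneg_right hst hr0) ht
  have hnorm : ∀ a : ℝ, 0 ≤ a → ‖a • x‖ = a * r := fun a ha => by
    rw [norm_smul, Real.norm_eq_abs, abs_of_nonneg ha]
  have hclosed : (t - s) * r / ((1 - s * r) * (1 - t * r)) =
      (1 - t * r)⁻¹ - (1 - s * r)⁻¹ := by
    field_simp [(sub_pos.2 hs').ne', (sub_pos.2 ht).ne']
    ring
  have hsx : ‖s • x‖ < 1 := by rwa [hnorm s hs]
  have htx : ‖t • x‖ < 1 := by rwa [hnorm t (hs.trans hst)]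
  rw [← hclosed, ← dist_smul_smul_of_le x hst]
  refine le_antisymm ?_ ?_
  · simpa only [hnorm s hs, hnorm t (hs.trans hst)] using cassinian_unitBall_le hsx htx
  · rcases eq_or_ne x 0 with rfl | hx
    · simpa using cassinian_nonneg _ _ _
    have hr' : 0 < r := norm_pos_iff.2 hx
    have hend : ∀ a : ℝ, a * r < 1 → dist (a • x) (r⁻¹ • x) = 1 - a * r := fun a ha => by
      rw [dist_smul_smul_of_le x (by rw [← one_div, le_div_iff₀ hr']; exact ha.le), ← hr]
      field_simp
    calc dist (s • x) (t • x) / ((1 - s * r) * (1 - t * r))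
        = dist (s • x) (t • x) / (dist (s • x) (r⁻¹ • x) * dist (r⁻¹ • x) (t • x)) := by
          rw [hend s hs', dist_comm (r⁻¹ • x), hend t ht]
      _ ≤ _ := dist_div_le_cassinian_unitBall hsx htx (norm_smul_inv_norm hx)

lemma cassinian_unitBall_zero {x : E n} (hx : ‖x‖ < 1) :
    cassinian (ball 0 1) 0 x = ‖x‖ / (1 - ‖x‖) := by
  have h := cassinian_unitBall_smul_smul x le_rfl zero_le_one (by rwa [one_mul])
  rw [zero_smul, one_smul] at h
  rw [h]
  field_simp [(sub_pos.2 hx).ne']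
  ring

lemma sum_ofReal_sub_le_of_monotoneOn {f : ℝ → ℝ} {a b : ℝ} (hf : MonotoneOn f (Icc a b))
    {u : ℕ → ℝ} (hu : Monotone u) (hmem : ∀ i, u i ∈ Icc a b) (k : ℕ) :
    ∑ i ∈ Finset.range k, ENNReal.ofReal (f (u (i + 1)) - f (u i)) ≤
      ENNReal.ofReal (f b - f a) := by
  have hinc : ∀ i, 0 ≤ f (u (i + 1)) - f (u i) := fun i =>
    sub_nonneg.2 (hf (hmem i) (hmem (i + 1)) (hu i.le_succ))
  rw [← ENNReal.ofReal_sum_of_nonneg fun i _ => hinc i, Finset.sum_range_sub (fun i => f (u i))]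
  have hb := hf (hmem k) (right_mem_Icc.2 ((hmem 0).1.trans (hmem 0).2)) (hmem k).2
  have ha := hf (left_mem_Icc.2 ((hmem 0).1.trans (hmem 0).2)) (hmem 0) (hmem 0).1
  exact ENNReal.ofReal_le_ofReal (by linarith)

lemma ofReal_cassinian_le_cassinianLength (D : Set (E n)) (g : ℝ → E n) :
    ENNReal.ofReal (cassinian D (g 0) (g 1)) ≤ cassinianLength D g := by
  have hu : Monotone fun i : ℕ => min (i : ℝ) 1 := fun i j hij =>
    min_le_min_right 1 (Nat.cast_le.2 hij)
  have hmem : ∀ i : ℕ, min (i : ℝ) 1 ∈ Icc (0 : ℝ) 1 := fun i =>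
    ⟨le_min i.cast_nonneg zero_le_one, min_le_right _ _⟩
  refine le_of_eq_of_le ?_ (le_iSup _ (1, ⟨fun i : ℕ => min (i : ℝ) 1, hu, hmem⟩))
  simp

lemma ofReal_cassinian_le_innerCassinian (D : Set (E n)) (x y : E n) :
    ENNReal.ofReal (cassinian D x y) ≤ innerCassinian D x y := by
  refine le_iInf fun g => ?_
  obtain ⟨g, -, rfl, rfl, -⟩ := g
  exact ofReal_cassinian_le_cassinianLength D g

lemma cassinianLength_unitBall_smul_le {x : E n} (hx : ‖x‖ < 1) :
    cassinianLength (ball 0 1) (fun t : ℝ => t • x) ≤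
      ENNReal.ofReal (cassinian (ball 0 1) 0 x) := by
  have hray : ∀ s t : ℝ, s ∈ Icc (0 : ℝ) 1 → t ∈ Icc (0 : ℝ) 1 → s ≤ t →
      cassinian (ball 0 1) (s • x) (t • x) = (1 - t * ‖x‖)⁻¹ - (1 - s * ‖x‖)⁻¹ :=
    fun s t hs ht hst => cassinian_unitBall_smul_smul x hs.1 hst
      (lt_of_le_of_lt (mul_le_of_le_one_left (norm_nonneg x) ht.2) hx)
  have hmono : MonotoneOn (fun t : ℝ => (1 - t * ‖x‖)⁻¹) (Icc 0 1) := fun s hs t ht hst =>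
    sub_nonneg.1 (hray s t hs ht hst ▸ cassinian_nonneg _ _ _)
  have hend := hray 0 1 (left_mem_Icc.2 zero_le_one) (right_mem_Icc.2 zero_le_one) zero_le_one
  rw [zero_smul, one_smul] at hend
  refine iSup_le fun ⟨k, u, hu, hmem⟩ => ?_
  rw [hend]
  refine le_of_eq_of_le (Finset.sum_congr rfl fun i _ => ?_)
    (sum_ofReal_sub_le_of_monotoneOn hmono hu hmem k)
  rw [hray _ _ (hmem i) (hmem (i + 1)) (hu i.le_succ)]

lemma innerCassinian_unitBall_zero_le {x : E n} (hx : ‖x‖ < 1) :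
    innerCassinian (ball 0 1) 0 x ≤ ENNReal.ofReal (cassinian (ball 0 1) 0 x) := by
  have hsub : (fun t : ℝ => t • x) '' Icc 0 1 ⊆ ball 0 1 := by
    rintro _ ⟨t, ht, rfl⟩
    exact (convex_ball 0 1).smul_mem_of_zero_mem (mem_ball_self one_pos)
      (mem_ball_zero_iff.2 hx) ht
  have hcont : ContinuousOn (fun t : ℝ => t • x) (Icc 0 1) := by fun_prop
  exact iInf_le_of_le ⟨fun t : ℝ => t • x, hcont, zero_smul ℝ x, one_smul ℝ x, hsub⟩
    (cassinianLength_unitBall_smul_le hx)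

theorem innerCassinian_ball_zero_general (n : ℕ) (x : E n)
    (hx : x ∈ ball (0 : E n) 1) :
    innerCassinian (ball (0 : E n) 1) (0 : E n) x =
        ENNReal.ofReal (cassinian (ball (0 : E n) 1) (0 : E n) x) ∧
      cassinian (ball (0 : E n) 1) (0 : E n) x = ‖x‖ / (1 - ‖x‖) := by
  have hx' : ‖x‖ < 1 := mem_ball_zero_iff.1 hx
  exact ⟨le_antisymm (innerCassinian_unitBall_zero_le hx')
      (ofReal_cassinian_le_innerCassinian _ _ _),
    cassinian_unitBall_zero hx'⟩

theorem innerCassinian_ball_zero (n : ℕ) (hn : 2 ≤ n) (x : E n)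
    (hx : x ∈ ball (0 : E n) 1) :
    innerCassinian (ball (0 : E n) 1) (0 : E n) x =
        ENNReal.ofReal (cassinian (ball (0 : E n) 1) (0 : E n) x) ∧
      cassinian (ball (0 : E n) 1) (0 : E n) x = ‖x‖ / (1 - ‖x‖) :=
  innerCassinian_ball_zero_general n x hx
end
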